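/- For vectors u, v in R^n embedded in the Clifford algebra with positive definite form, u and v are linearly dependent if and only if uv = vu in the Clifford algebra. -/

import Mathlib

/-! If `ι u` and `ι v` commute, the relation `ι u ι v + ι v ι u = polar Q u v` makes `ι u ι v` the
scalar `polar Q u v / 2`, while squaring gives `(ι u ι v)² = ι u² ι v² = Q u Q v`. Hence
`polar Q u v ^ 2 = 4 Q u Q v`, which for the standard form is the equality case of the
Cauchy–Schwarz inequality, so `u` and `v` are collinear. -/

open CliffordAlgebra

noncomputable def Qpos (n : ℕ) : QuadraticForm ℝ (Fin n → ℝ) :=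
  QuadraticMap.weightedSumSquares ℝ (fun _ : Fin n => (1 : ℝ))

theorem CliffordAlgebra.polar_sq_eq_of_commute {K M : Type*} [Field K] [Invertible (2 : K)]
    [AddCommGroup M] [Module K M] {Q : QuadraticForm K M} {u v : M}
    (h : Commute (ι Q u) (ι Q v)) :
    QuadraticMap.polar Q u v ^ 2 = 4 * (Q u * Q v) := by
  have hpolar : ι Q u * ι Q v + ι Q u * ι Q v = algebraMap K _ (QuadraticMap.polar Q u v) := by
    rw [← ι_mul_ι_add_swap, h.eq]
  have hsq : ι Q u * ι Q v * (ι Q u * ι Q v) = algebraMap K _ (Q u * Q v) := by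
    rw [h.symm.mul_mul_mul_comm, ι_sq_scalar, ι_sq_scalar, map_mul]
  apply (algebraMap K (CliffordAlgebra Q)).injective
  calc algebraMap K _ (QuadraticMap.polar Q u v ^ 2)
      = (ι Q u * ι Q v + ι Q u * ι Q v) * (ι Q u * ι Q v + ι Q u * ι Q v) := by
        rw [hpolar, sq, map_mul]
    _ = 4 * (ι Q u * ι Q v * (ι Q u * ι Q v)) := by noncomm_ring
    _ = algebraMap K _ (4 * (Q u * Q v)) := by rw [hsq, map_mul (algebraMap K _) 4, map_ofNat]

theorem eq_zero_or_exists_eq_smul_of_real_inner_mul_inner_self_eq {F : Type*}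
    [NormedAddCommGroup F] [InnerProductSpace ℝ F] {x y : F}
    (h : inner ℝ x y * inner ℝ x y = inner ℝ x x * inner ℝ y y) :
    x = 0 ∨ ∃ r : ℝ, y = r • x := by
  refine ((norm_inner_eq_norm_tfae ℝ x y).out 0 2).mp ((sq_eq_sq₀ (norm_nonneg _) ?_).mp ?_)
  · positivity
  · rw [Real.norm_eq_abs, sq_abs, mul_pow, ← real_inner_self_eq_norm_sq,
      ← real_inner_self_eq_norm_sq, sq, h]

theorem Qpos_apply (n : ℕ) (u : Fin n → ℝ) :
    Qpos n u = inner ℝ (WithLp.toLp 2 u) (WithLp.toLp 2 u) := by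
  simp only [Qpos, QuadraticMap.weightedSumSquares_apply, one_smul, PiLp.inner_apply,
    RCLike.inner_apply, conj_trivial]

theorem polar_Qpos (n : ℕ) (u v : Fin n → ℝ) :
    QuadraticMap.polar (Qpos n) u v = 2 * inner ℝ (WithLp.toLp 2 u) (WithLp.toLp 2 v) := by
  simp only [QuadraticMap.polar, Qpos, QuadraticMap.weightedSumSquares_apply, one_smul,
    Pi.add_apply, PiLp.inner_apply, RCLike.inner_apply, conj_trivial, Finset.mul_sum,
    ← Finset.sum_sub_distrib]
  exact Finset.sum_congr rfl fun i _ => by ring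

theorem stmt7 (n : ℕ) (u v : Fin n → ℝ) :
    ι (Qpos n) u * ι (Qpos n) v = ι (Qpos n) v * ι (Qpos n) u ↔
      ((∃ c : ℝ, u = c • v) ∨ (∃ c : ℝ, v = c • u)) := by
  constructor
  · intro h
    have hcs := CliffordAlgebra.polar_sq_eq_of_commute h
    rw [polar_Qpos, Qpos_apply, Qpos_apply] at hcs
    rcases eq_zero_or_exists_eq_smul_of_real_inner_mul_inner_self_eq
        (x := WithLp.toLp 2 u) (y := WithLp.toLp 2 v) (by linarith) with hu | ⟨r, hr⟩
    · exact Or.inl ⟨0, by simpa using congrArg WithLp.ofLp hu⟩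
    · exact Or.inr ⟨r, congrArg WithLp.ofLp hr⟩
  · rintro (⟨c, rfl⟩ | ⟨c, rfl⟩) <;> rw [map_smul, smul_mul_assoc, mul_smul_comm]
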